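/- arXiv:2507.09345 — 3 statements merged into one kernel-verified Lean document; each statement's English description precedes it below -/
import Mathlib

section
/- In the polynomial ring Z[x,y,z,w], every homogeneous polynomial of degree 4 lies in the ideal generated by x^2, y^2, z^2, w^2 and xy; equivalently, the degree-4 homogeneous component of the quotient Z[x,y,z,w]/(x^2, y^2, z^2, w^2, xy) is zero. -/
/-!
Every monomial of degree 4 in four variables has a repeated variable or is `xyzw`, so it is
divisible by one of `x², y², z², w², xy`; and an ideal spanned by monomials contains a polynomial
as soon as each monomial of its support is divisible by a generator.
-/

open MvPolynomial

theorem Finsupp.exists_two_le_or_forall_one_le_of_card_le_degree {σ : Type*} [Fintype σ]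
    {d : σ →₀ ℕ} (hd : Fintype.card σ ≤ d.degree) : (∃ i, 2 ≤ d i) ∨ ∀ i, 1 ≤ d i := by
  by_contra! h
  obtain ⟨hle, j, hj⟩ := h
  have : d.degree < Fintype.card σ := by
    rw [Finsupp.degree_eq_sum, Fintype.card_eq_sum_ones]
    exact Finset.sum_lt_sum (fun i _ => Nat.le_of_lt_succ (hle i)) ⟨j, Finset.mem_univ j, hj⟩
  omega

theorem X_sq_and_X_zero_mul_X_one_eq_monomial_image :
    ({X 0 ^ 2, X 1 ^ 2, X 2 ^ 2, X 3 ^ 2, X 0 * X 1} : Set (MvPolynomial (Fin 4) ℤ)) =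
      (fun s => monomial s 1) '' {Finsupp.single 0 2, Finsupp.single 1 2, Finsupp.single 2 2,
        Finsupp.single 3 2, Finsupp.single 0 1 + Finsupp.single 1 1} := by
  simp only [Set.image_insert_eq, Set.image_singleton, X_pow_eq_monomial]
  rw [X, X, monomial_mul, mul_one]

/-- In `ℤ[x,y,z,w]`, every homogeneous polynomial of degree 4 lies in the ideal
generated by `x^2, y^2, z^2, w^2` and `x*y`. -/
theorem degree_four_mem_ideal_int
    (f : MvPolynomial (Fin 4) ℤ) (hf : f.IsHomogeneous 4) :
    f ∈ Ideal.span ({X 0 ^ 2, X 1 ^ 2, X 2 ^ 2, X 3 ^ 2, X 0 * X 1} :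
      Set (MvPolynomial (Fin 4) ℤ)) := by
  rw [X_sq_and_X_zero_mul_X_one_eq_monomial_image, mem_ideal_span_monomial_image]
  intro d hd
  have hdeg : Fintype.card (Fin 4) ≤ d.degree := (hf.degree_eq_sum_deg_support hd).le
  rcases Finsupp.exists_two_le_or_forall_one_le_of_card_le_degree hdeg with ⟨i, hi⟩ | hpos
  · refine ⟨Finsupp.single i 2, ?_, Finsupp.single_le_iff.mpr hi⟩
    fin_cases i <;> simp
  · refine ⟨Finsupp.single 0 1 + Finsupp.single 1 1, by simp, fun i => ?_⟩
    fin_cases i <;> simp [hpos]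
end

section
/- Let R be a commutative ring and p0, p1, p2, p3, p4 ∈ R. Set b = p0^2 + p1*p2 + p3*p4 and let A be the 4×4 matrix over R with rows (p0, 0, −p1, −p3), (0, p0, p4, −p2), (−p2, p3, −p0, 0), (−p4, −p1, 0, −p0). Then A^2 = b · I₄, i.e. the square of A is b times the 4×4 identity matrix. -/
/-- Cyclic matrix factorization: for elements `p0, …, p4` of a commutative ring `R`
and `b = p0^2 + p1*p2 + p3*p4`, the 4×4 matrix with rows `(p0, 0, -p1, -p3)`,
`(0, p0, p4, -p2)`, `(-p2, p3, -p0, 0)`, `(-p4, -p1, 0, -p0)` squares to `b • I₄`. -/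
theorem matrix_sq_eq_smul_one {R : Type*} [CommRing R] (p0 p1 p2 p3 p4 : R) :
    (!![p0, 0, -p1, -p3;
        0, p0, p4, -p2;
        -p2, p3, -p0, 0;
        -p4, -p1, 0, -p0] : Matrix (Fin 4) (Fin 4) R) ^ 2 =
      (p0 ^ 2 + p1 * p2 + p3 * p4) • (1 : Matrix (Fin 4) (Fin 4) R) := by
  ext i j
  fin_cases i <;> fin_cases j <;>
    simp [pow_two, Matrix.mul_apply, Fin.sum_univ_four, Matrix.one_apply] <;> ring
end

section
/- Let R be a commutative ring and t, p0, p1, p2, p3, p4 ∈ R. The determinant of the 4×4 matrix over R with rows (t−p0, 0, p1, p3), (0, t−p0, −p4, p2), (p2, −p3, t+p0, 0), (p4, p1, 0, t+p0) equals (t^2 − p0^2 − p1*p2 − p3*p4)^2. -/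
/-- Determinantal representation: for elements `t, p0, …, p4` of a commutative ring `R`,
the determinant of the 4×4 matrix with rows `(t-p0, 0, p1, p3)`, `(0, t-p0, -p4, p2)`,
`(p2, -p3, t+p0, 0)`, `(p4, p1, 0, t+p0)` equals `(t^2 - p0^2 - p1*p2 - p3*p4)^2`. -/
theorem det_eq_sq {R : Type*} [CommRing R] (t p0 p1 p2 p3 p4 : R) :
    (!![t - p0, 0, p1, p3;
        0, t - p0, -p4, p2;
        p2, -p3, t + p0, 0;
        p4, p1, 0, t + p0] : Matrix (Fin 4) (Fin 4) R).det =
      (t ^ 2 - p0 ^ 2 - p1 * p2 - p3 * p4) ^ 2 := by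
  open Matrix Finset in
  simp only [det_succ_row_zero, submatrix_apply, submatrix_submatrix, det_unique,
    Fin.default_eq_zero, Function.comp_apply, Fin.sum_univ_succ, Fin.zero_succAbove,
    Fin.succ_succAbove_zero, Fin.succ_succAbove_succ, univ_unique, sum_singleton, Fin.val_zero,
    Fin.val_succ, Fin.val_eq_zero, of_apply, cons_val_zero, cons_val_succ]
  ring
end
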